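/- Let ℓ ≥ 1 and let x : {1,...,3ℓ} → {0,1}. Define u := Σ_{j=0}^{ℓ−1} (2·x_{3j+1}' + x_{3j+2}')·8^j and v := Σ_{j=0}^{ℓ−1} x_{3j+3}'·8^j, where x'_m denotes the bit of x in the j-th block (blocks indexed from the least significant end). Then for every j with 0 ≤ j ≤ ℓ−1, the bit of value 4·8^j in u + v (i.e., ⌊(u+v)/(4·8^j)⌋ mod 2) equals x'_{3j+1} ∧ x'_{3j+2} ∧ x'_{3j+3}. -/

import Mathlib

/-!
Adding the three bits of a block as `2 a + b + c` gives at most `4 < 8`, so the base-8 digits of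
`u + v` are exactly these block sums, without carries; and `(2 a + b + c) / 4 = a b c` for bits.
-/

open Finset

namespace Nat

theorem sum_range_mul_pow_eq_add_mul {b : ℕ} (d : ℕ → ℕ) (n : ℕ) :
    ∑ i ∈ range (n + 1), d i * b ^ i = d 0 + (∑ i ∈ range n, d (i + 1) * b ^ i) * b := by
  rw [sum_range_succ', sum_mul, pow_zero, mul_one, add_comm]
  simp only [pow_succ, mul_assoc]

theorem sum_range_mul_pow_div_pow_mod {b : ℕ} (d : ℕ → ℕ) (hd : ∀ i, d i < b) {n j : ℕ}
    (hj : j < n) : (∑ i ∈ range n, d i * b ^ i) / b ^ j % b = d j := by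
  have hb : 0 < b := (Nat.zero_le _).trans_lt (hd 0)
  obtain ⟨n, rfl⟩ := Nat.exists_eq_add_of_lt hj
  induction j generalizing d n with
  | zero =>
    rw [sum_range_mul_pow_eq_add_mul, pow_zero, Nat.div_one, Nat.add_mul_mod_self_right,
      Nat.mod_eq_of_lt (hd 0)]
  | succ j ih =>
    rw [show j + 1 + n + 1 = j + n + 1 + 1 by omega, sum_range_mul_pow_eq_add_mul, pow_succ',
      ← Nat.div_div_eq_div_mul, Nat.add_mul_div_right _ _ hb, Nat.div_eq_of_lt (hd 0), zero_add]
    exact ih (fun i => d (i + 1)) (fun i => hd (i + 1)) n (by omega)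

theorem div_four_mul_pow_eight_mod_two (a j : ℕ) :
    a / (4 * 8 ^ j) % 2 = a / 8 ^ j % 8 / 4 := by
  rw [show 8 = 4 * 2 from rfl, Nat.mod_mul_right_div_self, Nat.div_div_eq_div_mul, mul_comm]

theorem two_mul_add_add_div_four {a b c : ℕ} (ha : a ≤ 1) (hb : b ≤ 1) (hc : c ≤ 1) :
    (2 * a + b + c) / 4 = a * b * c := by
  interval_cases a <;> interval_cases b <;> interval_cases c <;> rfl

end Nat

theorem stmt_12_general (ℓ : ℕ) (x : ℕ → ℕ) (hx : ∀ m, x m ≤ 1) :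
    ∀ j < ℓ,
      ((∑ i ∈ Finset.range ℓ, (2 * x (3 * i + 1) + x (3 * i + 2)) * 8 ^ i) +
        (∑ i ∈ Finset.range ℓ, x (3 * i + 3) * 8 ^ i)) / (4 * 8 ^ j) % 2
        = x (3 * j + 1) * x (3 * j + 2) * x (3 * j + 3) := by
  intro j hj
  set d : ℕ → ℕ := fun i => 2 * x (3 * i + 1) + x (3 * i + 2) + x (3 * i + 3) with hd_def
  have hd : ∀ i, d i < 8 := fun i => by
    have := hx (3 * i + 1); have := hx (3 * i + 2); have := hx (3 * i + 3)
    simp only [hd_def]; omega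
  rw [← sum_add_distrib]
  simp only [← add_mul]
  rw [Nat.div_four_mul_pow_eight_mod_two, Nat.sum_range_mul_pow_div_pow_mod d hd hj]
  exact Nat.two_mul_add_add_div_four (hx _) (hx _) (hx _)

theorem stmt_12 (ℓ : ℕ) (hℓ : 1 ≤ ℓ) (x : ℕ → ℕ) (hx : ∀ m, x m ≤ 1) :
    ∀ j < ℓ,
      ((∑ i ∈ Finset.range ℓ, (2 * x (3 * i + 1) + x (3 * i + 2)) * 8 ^ i) +
        (∑ i ∈ Finset.range ℓ, x (3 * i + 3) * 8 ^ i)) / (4 * 8 ^ j) % 2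
        = x (3 * j + 1) * x (3 * j + 2) * x (3 * j + 3) :=
  stmt_12_general ℓ x hx
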